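/- arXiv:1611.09271 — 2 statements merged into one kernel-verified Lean document; each statement's English description precedes it below -/
import Mathlib

section
/- Let η, τ ∈ ℝ with η > 0, and let V = (τ/2)·χ_{(-η,η)}. Set u(t) = |η V(ηt)|^{1/2}, v(t) = sign(V(ηt)) u(t), and let K_V be the operator on L²(ℝ) with kernel (i/2) u(t) sign(t-s) v(s). If |τ|η < π, then ∑_{n=0}^∞ ∫_ℝ v(t) (K_V^{2n} u)(t) dt = 2 tan(τη/2). -/
open MeasureTheory

/-- The integral operator `K_V f(t) = (i/2) ∫ u(t) sign(t-s) v(s) f(s) ds`. -/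
noncomputable def Kop (u v : ℝ → ℝ) (f : ℝ → ℂ) : ℝ → ℂ :=
  fun t => Complex.I / 2 * ∫ s, ((u t * Real.sign (t - s) * v s : ℝ) : ℂ) * f s

/-!
After the substitution `t ↦ η t` one has `u = c χ` and `v = d χ`, with `χ` the indicator of
`(-1, 1)` and `c d = a := τ η / 2`. On `χ g` with `g` even, `K_V` multiplies by `i a` and takes the
primitive from `0`; on `χ G` with `G` odd it gives `-i a χ ∫_t^1 G`. Hence `K_V² (χ g) = a² χ 𝒢 g`,
where `𝒢 g (t) = ∫_t^1 ∫_0^s g` (`greenOp`) inverts `-d²/dt²` with `y'(0) = 0`, `y(1) = 0`,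
and the `n`-th term of the series is `2 a^(2n+1) ∫_0^1 𝒢ⁿ 1`.

Since `cos (a t) = cos a + a² 𝒢 (cos (a ·)) t`, iterating and integrating gives
`sin a = cos a ∑_{n<N} a^(2n+1) ∫_0^1 𝒢ⁿ 1 + a^(2N+1) ∫_0^1 𝒢ᴺ (cos (a ·))`.
`𝒢` is positive on `[0, 1]` and `0 ≤ cos (a t) ≤ 1` there, so the remainder is at most
`|a|^(2N+1) ∫_0^1 𝒢ᴺ 1`; the same identity at some `b ∈ (|a|, π/2)`, where every term is
nonnegative, bounds this by `tan b (|a| / b)^N`. So the series converges to `2 tan a`.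
-/

open Real intervalIntegral Set Filter Topology

noncomputable section

theorem eq_sum_pow_smul_add_of_eq_add {R M : Type*} [Semiring R] [AddCommMonoid M] [Module R M]
    (T : Module.End R M) (c : R) {x y : M} (h : x = y + c • T x) (N : ℕ) :
    x = ∑ n ∈ Finset.range N, c ^ n • (T ^ n) y + c ^ N • (T ^ N) x := by
  induction N with
  | zero => simp
  | succ N ih =>
    conv_lhs => rw [ih]
    conv_lhs => rw [h]
    rw [map_add, map_smul, ← Module.End.mul_apply, ← pow_succ, smul_add, smul_smul, ← pow_succ,
      Finset.sum_range_succ, add_assoc]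

theorem Function.Even.odd_primitive {g : ℝ → ℝ} (hg : g.Even) :
    (fun t => ∫ s in 0..t, g s).Odd := fun t => by
  have h := integral_comp_neg (a := 0) (b := t) g
  simp only [neg_zero, hg.eq] at h
  simp [integral_symm (-t), ← h]

theorem Function.Odd.integral_neg_eq_zero {g : ℝ → ℝ} (hg : g.Odd) (b : ℝ) :
    ∫ s in -b..b, g s = 0 := by
  have h := integral_comp_neg (a := -b) (b := b) g
  simp only [neg_neg, hg.eq, intervalIntegral.integral_neg] at h
  linarith

theorem Function.Even.integral_sub_integral {g : ℝ → ℝ} (hg : g.Even) (hc : Continuous g)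
    (b t : ℝ) : (∫ s in -b..t, g s) - ∫ s in t..b, g s = 2 * ∫ s in 0..t, g s := by
  have hsymm : ∫ s in -b..0, g s = ∫ s in 0..b, g s := by
    simpa [hg.eq] using (integral_comp_neg (a := 0) (b := b) g).symm
  rw [← integral_add_adjacent_intervals (hc.intervalIntegrable (-b) 0) (hc.intervalIntegrable 0 t),
    ← integral_add_adjacent_intervals (hc.intervalIntegrable t 0) (hc.intervalIntegrable 0 b),
    hsymm, integral_symm t 0]
  ring

theorem Function.Odd.integral_sub_integral {g : ℝ → ℝ} (hg : g.Odd) (hc : Continuous g)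
    (b t : ℝ) : (∫ s in -b..t, g s) - ∫ s in t..b, g s = -2 * ∫ s in t..b, g s := by
  have := integral_add_adjacent_intervals (hc.intervalIntegrable (μ := volume) (-b) t)
    (hc.intervalIntegrable t b)
  rw [hg.integral_neg_eq_zero] at this
  linarith

theorem integral_sign_sub_mul {g : ℝ → ℝ} {a b t : ℝ} (hat : a ≤ t) (htb : t ≤ b)
    (h₁ : IntervalIntegrable g volume a t) (h₂ : IntervalIntegrable g volume t b) :
    ∫ s in a..b, Real.sign (t - s) * g s = (∫ s in a..t, g s) - ∫ s in t..b, g s := by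
  have hlt : EqOn (fun s => Real.sign (t - s) * g s) g (uIoo a t) := fun s hs => by
    rw [uIoo_of_le hat] at hs
    simp [Real.sign_of_pos (sub_pos.2 hs.2)]
  have hgt : EqOn (fun s => Real.sign (t - s) * g s) (fun s => -g s) (uIoo t b) := fun s hs => by
    rw [uIoo_of_le htb] at hs
    simp [Real.sign_of_neg (sub_neg.2 hs.1)]
  rw [← integral_add_adjacent_intervals (h₁.congr_uIoo hlt.symm) (h₂.neg.congr_uIoo hgt.symm),
    integral_congr_uIoo hlt, integral_congr_uIoo hgt, intervalIntegral.integral_neg]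
  ring

theorem integral_mul_cos_mul (a x y : ℝ) :
    ∫ t in x..y, a * cos (a * t) = sin (a * y) - sin (a * x) :=
  integral_eq_sub_of_hasDerivAt (f := fun t => sin (a * t))
    (fun t _ => by simpa [mul_comm] using ((hasDerivAt_id t).const_mul a).sin)
    ((by fun_prop : Continuous fun t => a * cos (a * t)).intervalIntegrable x y)

theorem integral_mul_sin_mul (a x y : ℝ) :
    ∫ t in x..y, a * sin (a * t) = cos (a * x) - cos (a * y) := by
  rw [integral_eq_sub_of_hasDerivAt (f := fun t => -cos (a * t))
    (fun t _ => by simpa [mul_comm] using ((hasDerivAt_id t).const_mul a).cos.fun_neg)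
    ((by fun_prop : Continuous fun t => a * sin (a * t)).intervalIntegrable x y)]
  ring

def primitiveFrom (x₀ : ℝ) : C(ℝ, ℝ) →ₗ[ℝ] C(ℝ, ℝ) where
  toFun g := ⟨fun t => ∫ s in x₀..t, g s,
    continuous_primitive (fun _ _ => g.continuous.intervalIntegrable _ _) x₀⟩
  map_add' g h := by
    ext t
    exact integral_add (g.continuous.intervalIntegrable _ _) (h.continuous.intervalIntegrable _ _)
  map_smul' c g := by
    ext t
    exact integral_smul c _

theorem primitiveFrom_apply (x₀ : ℝ) (g : C(ℝ, ℝ)) (t : ℝ) :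
    primitiveFrom x₀ g t = ∫ s in x₀..t, g s := rfl

def greenOp : Module.End ℝ C(ℝ, ℝ) := -(primitiveFrom 1 ∘ₗ primitiveFrom 0)

theorem greenOp_apply (g : C(ℝ, ℝ)) (t : ℝ) :
    greenOp g t = ∫ s in t..1, ∫ r in 0..s, g r := by
  simp [greenOp, primitiveFrom_apply, integral_symm t 1]

theorem greenOp_nonneg {g : C(ℝ, ℝ)} (hg : ∀ t ∈ Icc (0 : ℝ) 1, 0 ≤ g t) :
    ∀ t ∈ Icc (0 : ℝ) 1, 0 ≤ greenOp g t := fun t ht => by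
  rw [greenOp_apply]
  refine integral_nonneg ht.2 fun s hs => integral_nonneg (ht.1.trans hs.1) fun r hr => ?_
  exact hg r ⟨hr.1, hr.2.trans hs.2⟩

theorem greenOp_pow_nonneg {g : C(ℝ, ℝ)} (hg : ∀ t ∈ Icc (0 : ℝ) 1, 0 ≤ g t) (n : ℕ) :
    ∀ t ∈ Icc (0 : ℝ) 1, 0 ≤ (greenOp ^ n) g t := by
  induction n with
  | zero => simpa using hg
  | succ n ih => simpa [pow_succ'] using greenOp_nonneg ih

theorem greenOp_pow_mono {g h : C(ℝ, ℝ)} (hgh : ∀ t ∈ Icc (0 : ℝ) 1, g t ≤ h t) (n : ℕ) :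
    ∀ t ∈ Icc (0 : ℝ) 1, (greenOp ^ n) g t ≤ (greenOp ^ n) h t := fun t ht => by
  have := greenOp_pow_nonneg (g := h - g) (fun t ht => sub_nonneg.2 (hgh t ht)) n t ht
  simpa using this

theorem Function.Even.greenOp {g : C(ℝ, ℝ)} (hg : (⇑g).Even) : (⇑(greenOp g)).Even := fun t => by
  have hG := (primitiveFrom 0 g).continuous
  have := integral_add_adjacent_intervals (hG.intervalIntegrable (μ := volume) (-t) t)
    (hG.intervalIntegrable t 1)
  simp only [primitiveFrom_apply, hg.odd_primitive.integral_neg_eq_zero, zero_add] at this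
  simp only [_root_.greenOp_apply, this]

theorem even_greenOp_pow_one (n : ℕ) : (⇑((greenOp ^ n) 1)).Even := by
  induction n with
  | zero => exact Function.Even.const 1
  | succ n ih => simpa [pow_succ'] using ih.greenOp

def cosMul (a : ℝ) : C(ℝ, ℝ) := ⟨fun t => cos (a * t), by fun_prop⟩

theorem cosMul_apply (a t : ℝ) : cosMul a t = cos (a * t) := rfl

theorem cos_mul_eq_add_greenOp (a t : ℝ) :
    cos (a * t) = cos a + a ^ 2 * greenOp (cosMul a) t := by
  have hsin : ∀ s, a * ∫ r in 0..s, cosMul a r = sin (a * s) := fun s => by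
    simp [cosMul_apply, ← intervalIntegral.integral_const_mul, integral_mul_cos_mul]
  have : a ^ 2 * greenOp (cosMul a) t = cos (a * t) - cos a := by
    calc a ^ 2 * greenOp (cosMul a) t
        = a * ∫ s in t..1, a * ∫ r in 0..s, cosMul a r := by
          rw [greenOp_apply, intervalIntegral.integral_const_mul, sq, mul_assoc]
      _ = cos (a * t) - cos a := by
          simp only [hsin, ← intervalIntegral.integral_const_mul, integral_mul_sin_mul, mul_one]
  linarith

def greenMoment (n : ℕ) : ℝ := ∫ t in 0..1, (greenOp ^ n) 1 t

theorem greenMoment_nonneg (n : ℕ) : 0 ≤ greenMoment n :=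
  integral_nonneg zero_le_one (greenOp_pow_nonneg (fun _ _ => zero_le_one) n)

theorem sin_eq_cos_mul_sum_add (a : ℝ) (N : ℕ) :
    sin a = cos a * ∑ n ∈ Finset.range N, a ^ (2 * n + 1) * greenMoment n
      + a ^ (2 * N + 1) * ∫ t in 0..1, (greenOp ^ N) (cosMul a) t := by
  have hfix : cosMul a = cos a • 1 + a ^ 2 • greenOp (cosMul a) := by
    ext t
    simp [cos_mul_eq_add_greenOp a t, cosMul_apply]
  have h := congrArg (fun f => a * primitiveFrom 0 f 1)
    (eq_sum_pow_smul_add_of_eq_add greenOp (a ^ 2) hfix N)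
  simp only [map_add, map_sum, map_smul, ContinuousMap.add_apply, ContinuousMap.coe_sum,
    Finset.sum_apply, ContinuousMap.smul_apply, primitiveFrom_apply, smul_eq_mul] at h
  rw [← intervalIntegral.integral_const_mul] at h
  simp only [cosMul_apply, integral_mul_cos_mul, mul_one, mul_zero, sin_zero, sub_zero] at h
  rw [h, mul_add, Finset.mul_sum, Finset.mul_sum]
  simp only [greenMoment, pow_succ, pow_mul]
  congr 1
  · exact Finset.sum_congr rfl fun n _ => by ring
  · ring

theorem cos_mul_mem_Icc {a : ℝ} (ha : |a| ≤ π / 2) {t : ℝ} (ht : t ∈ Icc (0 : ℝ) 1) :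
    cos (a * t) ∈ Icc 0 1 := by
  refine ⟨cos_nonneg_of_neg_pi_div_two_le_of_le ?_ ?_, cos_le_one _⟩ <;>
  · have : |a * t| ≤ |a| := by
      rw [abs_mul, abs_of_nonneg ht.1]
      exact mul_le_of_le_one_right (abs_nonneg a) ht.2
    linarith [abs_le.1 (this.trans ha)]

theorem integral_greenOp_pow_cosMul_mem_Icc {a : ℝ} (ha : |a| ≤ π / 2) (N : ℕ) :
    ∫ t in 0..1, (greenOp ^ N) (cosMul a) t ∈ Icc 0 (greenMoment N) := by
  have hcos := fun t (ht : t ∈ Icc (0 : ℝ) 1) => cos_mul_mem_Icc ha ht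
  refine ⟨integral_nonneg zero_le_one
      (greenOp_pow_nonneg (fun t ht => (hcos t ht).1) N), ?_⟩
  refine integral_mono_on zero_le_one ?_ ?_ (greenOp_pow_mono (fun t ht => (hcos t ht).2) N)
  · exact ((greenOp ^ N) (cosMul a)).continuous.intervalIntegrable _ _
  · exact ((greenOp ^ N) 1).continuous.intervalIntegrable _ _

theorem pow_mul_greenMoment_le_tan {b : ℝ} (hb0 : 0 < b) (hb : b < π / 2) (N : ℕ) :
    b ^ (2 * N + 1) * greenMoment N ≤ tan b := by
  have hcos : 0 < cos b := cos_pos_of_mem_Ioo ⟨by linarith, hb⟩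
  have hsum := sin_eq_cos_mul_sum_add b (N + 1)
  have hrest : 0 ≤ ∑ n ∈ Finset.range N, b ^ (2 * n + 1) * greenMoment n :=
    Finset.sum_nonneg fun n _ => mul_nonneg (by positivity) (greenMoment_nonneg n)
  have hrem := (integral_greenOp_pow_cosMul_mem_Icc (abs_le.2 ⟨by linarith, hb.le⟩) (N + 1)).1
  rw [Finset.sum_range_succ] at hsum
  rw [tan_eq_sin_div_cos, le_div_iff₀ hcos]
  nlinarith [mul_nonneg (pow_nonneg hb0.le (2 * (N + 1) + 1)) hrem]

theorem abs_pow_mul_greenMoment_le {a b : ℝ} (hab : |a| < b) (hb : b < π / 2) (N : ℕ) :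
    |a ^ (2 * N + 1) * greenMoment N| ≤ tan b * (|a| / b) ^ N := by
  have hb0 : 0 < b := (abs_nonneg a).trans_lt hab
  have hr0 : 0 ≤ |a| / b := by positivity
  have hr1 : |a| / b ≤ 1 := (div_le_one hb0).2 hab.le
  calc |a ^ (2 * N + 1) * greenMoment N|
      = (|a| / b) ^ (2 * N + 1) * (b ^ (2 * N + 1) * greenMoment N) := by
        rw [abs_mul, abs_pow, abs_of_nonneg (greenMoment_nonneg N), div_pow]
        field_simp
    _ ≤ (|a| / b) ^ N * tan b :=
        mul_le_mul (pow_le_pow_of_le_one hr0 hr1 (by omega))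
          (pow_mul_greenMoment_le_tan hb0 hb N)
          (mul_nonneg (by positivity) (greenMoment_nonneg N)) (by positivity)
    _ = tan b * (|a| / b) ^ N := mul_comm _ _

theorem hasSum_pow_mul_greenMoment {a : ℝ} (ha : |a| < π / 2) :
    HasSum (fun n => a ^ (2 * n + 1) * greenMoment n) (tan a) := by
  set b := (|a| + π / 2) / 2 with hb_def
  have hab : |a| < b := by rw [hb_def]; linarith
  have hb : b < π / 2 := by rw [hb_def]; linarith
  have hr0 : 0 ≤ |a| / b := by positivity
  have hr1 : |a| / b < 1 := (div_lt_one ((abs_nonneg a).trans_lt hab)).2 hab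
  have hgeom : Tendsto (fun N => tan b * (|a| / b) ^ N) atTop (𝓝 0) := by
    simpa using (tendsto_pow_atTop_nhds_zero_of_lt_one hr0 hr1).const_mul (tan b)
  have hsummable : Summable fun n => a ^ (2 * n + 1) * greenMoment n :=
    .of_norm_bounded ((summable_geometric_of_lt_one hr0 hr1).mul_left (tan b))
      (abs_pow_mul_greenMoment_le hab hb)
  have hremainder : Tendsto (fun N => a ^ (2 * N + 1) * ∫ t in 0..1, (greenOp ^ N) (cosMul a) t)
      atTop (𝓝 0) := by
    refine squeeze_zero_norm (fun N => ?_) hgeom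
    obtain ⟨h0, h1⟩ := integral_greenOp_pow_cosMul_mem_Icc ha.le N
    refine le_trans ?_ (abs_pow_mul_greenMoment_le hab hb N)
    rw [Real.norm_eq_abs, abs_mul, abs_mul, abs_of_nonneg h0, abs_of_nonneg (greenMoment_nonneg N)]
    exact mul_le_mul_of_nonneg_left h1 (abs_nonneg _)
  have hcos : cos a ≠ 0 := (cos_pos_of_mem_Ioo (abs_lt.1 ha)).ne'
  refine hsummable.hasSum_iff_tendsto_nat.2 ?_
  have hpartial : ∀ N, ∑ n ∈ Finset.range N, a ^ (2 * n + 1) * greenMoment n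
      = (sin a - a ^ (2 * N + 1) * ∫ t in 0..1, (greenOp ^ N) (cosMul a) t) / cos a := fun N => by
    rw [sin_eq_cos_mul_sum_add a N]
    field_simp
    ring
  simp only [hpartial]
  simpa [tan_eq_sin_div_cos] using (tendsto_const_nhds.sub hremainder).div_const (cos a)

def χ : ℝ → ℝ := (Ioo (-1 : ℝ) 1).indicator 1

theorem integral_indicator_sign_mul (c d t : ℝ) {g : ℝ → ℝ} (hg : Continuous g) :
    ∫ s, c * χ t * Real.sign (t - s) * (d * χ s) * (χ s * g s)
      = c * d * χ t * ((∫ s in -1..t, g s) - ∫ s in t..1, g s) := by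
  by_cases ht : t ∈ Ioo (-1 : ℝ) 1
  · have hind : (fun s => c * χ t * Real.sign (t - s) * (d * χ s) * (χ s * g s))
        = (Ioo (-1 : ℝ) 1).indicator fun s => c * d * (Real.sign (t - s) * g s) := by
      ext s
      by_cases hs : s ∈ Ioo (-1 : ℝ) 1 <;> simp [χ, ht, hs]; ring
    rw [hind, MeasureTheory.integral_indicator measurableSet_Ioo, ← integral_Ioc_eq_integral_Ioo,
      ← integral_of_le (by norm_num), intervalIntegral.integral_const_mul,
      integral_sign_sub_mul ht.1.le ht.2.le (hg.intervalIntegrable _ _) (hg.intervalIntegrable _ _)]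
    simp [χ, ht]
  · simp [χ, ht]

theorem Kop_mul_ofReal (u v h : ℝ → ℝ) (w : ℂ) (t : ℝ) :
    Kop u v (fun s => w * h s) t
      = w * (Complex.I / 2) * ↑(∫ s, u t * Real.sign (t - s) * v s * h s) := by
  have : ∀ s, ((u t * Real.sign (t - s) * v s : ℝ) : ℂ) * (w * h s)
      = w * ↑(u t * Real.sign (t - s) * v s * h s) := fun s => by push_cast; ring
  simp only [Kop, this, MeasureTheory.integral_const_mul]
  have hcast : ∫ s, ((u t * Real.sign (t - s) * v s * h s : ℝ) : ℂ)
      = ↑(∫ s, u t * Real.sign (t - s) * v s * h s) := integral_ofReal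
  rw [hcast]
  ring

theorem Kop_indicator_mul (c d : ℝ) {g : ℝ → ℝ} (hg : Continuous g) (w : ℂ) :
    Kop (fun x => c * χ x) (fun x => d * χ x) (fun s => w * ↑(χ s * g s))
      = fun t => w * (Complex.I / 2)
          * ↑(c * d * χ t * ((∫ s in -1..t, g s) - ∫ s in t..1, g s)) := by
  ext t
  rw [Kop_mul_ofReal, integral_indicator_sign_mul c d t hg]

theorem Kop_Kop_indicator_mul (c d : ℝ) {g : C(ℝ, ℝ)} (hg : (⇑g).Even) (w : ℝ) :
    Kop (fun x => c * χ x) (fun x => d * χ x)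
        (Kop (fun x => c * χ x) (fun x => d * χ x) (fun s => ↑(w * (χ s * g s))))
      = fun t => ↑((c * d) ^ 2 * w * (χ t * greenOp g t)) := by
  set G := primitiveFrom 0 g
  have hG : (⇑G).Odd := hg.odd_primitive
  have hfirst : Kop (fun x => c * χ x) (fun x => d * χ x) (fun s => ↑(w * (χ s * g s)))
      = fun s => (w * Complex.I * (c * d)) * ↑(χ s * G s) := by
    simp only [Complex.ofReal_mul w, Kop_indicator_mul c d g.continuous,
      hg.integral_sub_integral g.continuous]
    ext t
    simp only [G, primitiveFrom_apply]
    push_cast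
    ring
  rw [hfirst, Kop_indicator_mul c d G.continuous]
  ext t
  rw [hG.integral_sub_integral G.continuous, greenOp_apply]
  simp only [G, primitiveFrom_apply]
  generalize ∫ s in t..1, ∫ r in 0..s, g r = X
  push_cast
  linear_combination (-(c * d : ℂ) ^ 2 * w * χ t * X) * Complex.I_mul_I

theorem Kop_iterate_indicator (c d : ℝ) (n : ℕ) :
    (Kop (fun x => c * χ x) (fun x => d * χ x))^[2 * n] (fun s => ((c * χ s : ℝ) : ℂ))
      = fun t => (((c * d) ^ (2 * n) * c * (χ t * (greenOp ^ n) 1 t) : ℝ) : ℂ) := by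
  induction n with
  | zero => ext t; simp
  | succ n ih =>
    rw [show 2 * (n + 1) = 2 + 2 * n by ring, Function.iterate_add_apply, ih]
    ext t
    simp only [Function.iterate_succ, Function.iterate_zero, Function.comp_apply, id,
      Kop_Kop_indicator_mul c d (even_greenOp_pow_one n), pow_succ', Module.End.mul_apply]
    ring_nf

theorem integral_indicator_mul_Kop_iterate (c d : ℝ) (n : ℕ) :
    ∫ t, ((d * χ t : ℝ) : ℂ)
        * (Kop (fun x => c * χ x) (fun x => d * χ x))^[2 * n] (fun s => ((c * χ s : ℝ) : ℂ)) t
      = ((2 * ((c * d) ^ (2 * n + 1) * greenMoment n) : ℝ) : ℂ) := by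
  have hind : ∀ t, d * χ t * ((c * d) ^ (2 * n) * c * (χ t * (greenOp ^ n) 1 t))
      = (c * d) ^ (2 * n + 1) * (Ioo (-1 : ℝ) 1).indicator ((greenOp ^ n) 1) t := fun t => by
    by_cases ht : t ∈ Ioo (-1 : ℝ) 1 <;> simp [χ, ht]
    ring
  have hcast : ∫ t, ((d * χ t * ((c * d) ^ (2 * n) * c * (χ t * (greenOp ^ n) 1 t)) : ℝ) : ℂ)
      = ↑(∫ t, d * χ t * ((c * d) ^ (2 * n) * c * (χ t * (greenOp ^ n) 1 t))) := integral_ofReal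
  have hsymm : ∫ t in -1..1, (greenOp ^ n) 1 t = 2 * greenMoment n := by
    simpa [greenMoment] using
      (even_greenOp_pow_one n).integral_sub_integral ((greenOp ^ n) 1).continuous 1 1
  simp only [Kop_iterate_indicator, ← Complex.ofReal_mul]
  rw [hcast]
  simp only [hind]
  rw [MeasureTheory.integral_const_mul, MeasureTheory.integral_indicator measurableSet_Ioo,
    ← integral_Ioc_eq_integral_Ioo, ← integral_of_le (by norm_num), hsymm]
  ring_nf

theorem Real.sign_mul_abs (x : ℝ) : Real.sign x * |x| = x := by
  rcases lt_trichotomy x 0 with h | rfl | h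
  · simp [Real.sign_of_neg h, abs_of_neg h]
  · simp
  · simp [Real.sign_of_pos h, abs_of_pos h]

theorem Real.sign_div_two (x : ℝ) : Real.sign (x / 2) = Real.sign x := by
  rcases lt_trichotomy x 0 with h | rfl | h
  · rw [Real.sign_of_neg h, Real.sign_of_neg (by linarith)]
  · simp
  · rw [Real.sign_of_pos h, Real.sign_of_pos (by linarith)]

theorem indicator_Ioo_neg_self_mul {η : ℝ} (hη : 0 < η) (t : ℝ) :
    (Ioo (-η) η).indicator (fun _ => (1 : ℝ)) (η * t) = χ t := by
  have : η * t ∈ Ioo (-η) η ↔ t ∈ Ioo (-1 : ℝ) 1 := by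
    simp only [mem_Ioo]
    constructor <;> rintro ⟨h₁, h₂⟩ <;> constructor <;> nlinarith
  by_cases ht : t ∈ Ioo (-1 : ℝ) 1 <;> simp [χ, ht, this]

theorem sqrt_abs_mul_half_mul_χ {η : ℝ} (hη : 0 ≤ η) (τ t : ℝ) :
    √|η * (τ / 2 * χ t)| = √(η * |τ| / 2) * χ t := by
  by_cases ht : t ∈ Ioo (-1 : ℝ) 1
  · simp only [χ, indicator_of_mem ht, Pi.one_apply, mul_one, abs_mul, abs_of_nonneg hη, abs_div,
      abs_two, mul_div_assoc]
  · simp [χ, ht]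

theorem sign_half_mul_χ_mul_χ (τ t : ℝ) :
    Real.sign (τ / 2 * χ t) * χ t = Real.sign τ * χ t := by
  by_cases ht : t ∈ Ioo (-1 : ℝ) 1 <;> simp [χ, ht, Real.sign_div_two]

end

theorem stmt3 (η τ : ℝ) (hη : 0 < η) (hsmall : |τ| * η < Real.pi)
    (V u v : ℝ → ℝ)
    (hV : V = fun t => (τ / 2) * Set.indicator (Set.Ioo (-η) η) (fun _ => (1 : ℝ)) t)
    (hu : u = fun t => Real.sqrt |η * V (η * t)|)
    (hv : v = fun t => Real.sign (V (η * t)) * u t) :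
    ∑' n : ℕ, ∫ t, (v t : ℂ) * ((Kop u v)^[2 * n] (fun s => (u s : ℂ))) t
      = 2 * Real.tan (τ * η / 2) := by
  set c := √(η * |τ| / 2)
  have hVη : ∀ t, V (η * t) = τ / 2 * χ t := fun t => by
    simp only [hV, indicator_Ioo_neg_self_mul hη]
  have hu' : u = fun t => c * χ t := by
    ext t
    simp only [hu, hVη, sqrt_abs_mul_half_mul_χ hη.le, c]
  have hv' : v = fun t => (Real.sign τ * c) * χ t := by
    ext t
    simp only [hv, hu', hVη, mul_left_comm _ c, sign_half_mul_χ_mul_χ]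
    ring
  have hcd : c * (Real.sign τ * c) = τ * η / 2 := by
    rw [mul_left_comm, ← sq, Real.sq_sqrt (by positivity)]
    linear_combination η / 2 * Real.sign_mul_abs τ
  have ha : |τ * η / 2| < π / 2 := by
    rw [abs_div, abs_mul, abs_of_pos hη, abs_two]
    linarith
  simp only [hu', hv', integral_indicator_mul_Kop_iterate, hcd]
  rw [← Complex.ofReal_tsum, ((hasSum_pow_mul_greenMoment ha).mul_left 2).tsum_eq]
  push_cast
  ring
end

section
/- For V = (τ/2)χ_{(-η,η)} with u, v, K_V as above, the cross term vanishes: ∫_ℝ v(t) ((1-K_V²)^{-1} K_V u)(t) dt = 0 (equivalently, ∫ v K_V^{2n+1} u = 0 for every n ≥ 0). -/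
open MeasureTheory

lemma Kop_parity (u v : ℝ → ℝ) (hu : ∀ t, u (-t) = u t) (hv : ∀ s, v (-s) = v s)
    (f : ℝ → ℂ) (ε : ℂ) (hf : ∀ s, f (-s) = ε * f s) (t : ℝ) :
    Kop u v f (-t) = -ε * Kop u v f t := by
  unfold Kop
  have h1 : (∫ s, ((u (-t) * Real.sign (-t - s) * v s : ℝ) : ℂ) * f s)
      = ∫ s, ((u (-t) * Real.sign (-t - (-s)) * v (-s) : ℝ) : ℂ) * f (-s) :=
    (integral_neg_eq_self _ _).symm
  rw [h1]
  have h2 : ∀ s : ℝ, ((u (-t) * Real.sign (-t - (-s)) * v (-s) : ℝ) : ℂ) * f (-s)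
      = -ε * (((u t * Real.sign (t - s) * v s : ℝ) : ℂ) * f s) := by
    intro s
    have hs : Real.sign (-t - (-s)) = - Real.sign (t - s) := by
      rw [show -t - (-s) = -(t - s) by ring, Real.sign_neg]
    rw [hs, hu, hv, hf]
    push_cast
    ring
  simp only [h2, integral_const_mul]
  ring

theorem stmt5 (η τ : ℝ) (hη : 0 < η)
    (V u v : ℝ → ℝ)
    (hV : V = fun t => (τ / 2) * Set.indicator (Set.Ioo (-η) η) (fun _ => (1 : ℝ)) t)
    (hu : u = fun t => Real.sqrt |η * V (η * t)|)
    (hv : v = fun t => Real.sign (V (η * t)) * u t) :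
    (∀ n : ℕ, ∫ t, (v t : ℂ) * ((Kop u v)^[2 * n + 1] (fun s => (u s : ℂ))) t = 0) ∧
      ∑' n : ℕ, ∫ t, (v t : ℂ) * ((Kop u v)^[2 * n + 1] (fun s => (u s : ℂ))) t = 0 := by
  -- V is even
  have hVeven : ∀ x : ℝ, V (-x) = V x := by
    intro x
    subst hV
    simp only
    congr 1
    by_cases h : x ∈ Set.Ioo (-η) η
    · have h' : -x ∈ Set.Ioo (-η) η := by
        simp only [Set.mem_Ioo] at h ⊢; constructor <;> linarith [h.1, h.2]
      rw [Set.indicator_of_mem h, Set.indicator_of_mem h']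
    · have h' : -x ∉ Set.Ioo (-η) η := by
        simp only [Set.mem_Ioo] at h ⊢
        intro h1; push_neg at h; exact absurd (by linarith [h1.2] : -η < x) (by
          intro h2; exact absurd (h h2) (by push_neg; linarith [h1.1]))
      rw [Set.indicator_of_notMem h, Set.indicator_of_notMem h']
  have hueven : ∀ t : ℝ, u (-t) = u t := by
    intro t
    rw [hu]
    simp only
    rw [show η * -t = -(η * t) by ring, hVeven]
  have hveven : ∀ t : ℝ, v (-t) = v t := by
    intro t
    rw [hv]
    simp only
    rw [show η * -t = -(η * t) by ring, hVeven, hueven]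
  -- parity of iterates
  have hiter : ∀ n : ℕ, ∀ t : ℝ,
      ((Kop u v)^[n] (fun s => (u s : ℂ))) (-t)
        = (-1 : ℂ) ^ n * ((Kop u v)^[n] (fun s => (u s : ℂ))) t := by
    intro n
    induction n with
    | zero => intro t; simpa using congrArg (fun x : ℝ => (x : ℂ)) (hueven t)
    | succ k ih =>
        intro t
        simp only [Function.iterate_succ_apply']
        have := Kop_parity u v hueven hveven ((Kop u v)^[k] (fun s => (u s : ℂ)))
          ((-1 : ℂ) ^ k) ih t
        rw [this]
        ring
  have hmain : ∀ n : ℕ,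
      ∫ t, (v t : ℂ) * ((Kop u v)^[2 * n + 1] (fun s => (u s : ℂ))) t = 0 := by
    intro n
    set g : ℝ → ℂ := fun t => (v t : ℂ) * ((Kop u v)^[2 * n + 1] (fun s => (u s : ℂ))) t
      with hg
    have hodd : ∀ t : ℝ, g (-t) = -g t := by
      intro t
      simp only [hg]
      rw [hveven, hiter (2 * n + 1) t]
      have hp : ((-1 : ℂ)) ^ (2 * n + 1) = -1 := by
        rw [pow_succ, pow_mul]; norm_num
      rw [hp]; ring
    have h1 : (∫ t, g (-t)) = ∫ t, g t := integral_neg_eq_self g _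
    have h2 : (∫ t, g (-t)) = -∫ t, g t := by
      simp only [hodd, integral_neg]
    have h3 : (∫ t, g t) = -∫ t, g t := h1.symm.trans h2
    exact CharZero.eq_neg_self_iff.mp h3
  refine ⟨hmain, ?_⟩
  simp only [hmain, tsum_zero]
end
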